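/- Let U ⊆ ℂ be open and let g : ℂ → ℂ be holomorphic on U with g(ζ) ≠ 0 and g'(ζ) ≠ 0 for all ζ ∈ U. Define K(ζ) = -(2|g'(ζ)|/(1+|g(ζ)|²))⁴ and N(ζ) = (1-|g(ζ)|²)/(1+|g(ζ)|²). Then the second Chern–Ricci function CR²(ζ) = ln((-K(ζ))^{-1/2}(1-N(ζ)²)), viewed as a function of (u,v) with ζ = u+iv, is harmonic on U: ∂²CR²/∂u² + ∂²CR²/∂v² = 0 at every point of U. -/

import Mathlib

/-!
On `U` we have `1 - N² = (2|g|/(1+|g|²))²` and `(-K)^(-1/2) = ((1+|g|²)/(2|g'|))²`, so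
`CR² = 2 (log |g| - log |g'|)`. Both `g` and `g' = dg/dζ` are holomorphic without zeros there, and
the log of the modulus of such a function is harmonic.
-/

open Complex InnerProductSpace Topology

section
variable {E F : Type*} [NormedAddCommGroup E] [NormedSpace ℝ E]
  [NormedAddCommGroup F] [NormedSpace ℝ F]

lemma iteratedDeriv_two_comp_line {f : E → F} {a w : E} {t : ℝ}
    (hf : ContDiffAt ℝ 2 f (a + t • w)) :
    iteratedDeriv 2 (fun s : ℝ => f (a + s • w)) t =
      iteratedFDeriv ℝ 2 f (a + t • w) ![w, w] := by
  have hline : ∀ s : ℝ, HasDerivAt (fun s : ℝ => a + s • w) w s := fun s => by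
    simpa using ((hasDerivAt_id s).smul_const w).const_add a
  have hline2 : iteratedDeriv 2 (fun s : ℝ => a + s • w) t = 0 := by
    simp [iteratedDeriv_succ, funext fun s => (hline s).deriv]
  have hchain := iteratedDeriv_vcomp_two (g := f) (f := fun s : ℝ => a + s • w) hf (by fun_prop)
  rw [Function.comp_def] at hchain
  rw [hchain, hline2, (hline t).deriv, map_zero, add_zero]
  congr 1
  ext i; fin_cases i <;> rfl

end

theorem InnerProductSpace.HarmonicAt.iteratedDeriv_two_add_iteratedDeriv_two {F : Type*}
    [NormedAddCommGroup F] [NormedSpace ℝ F] {f : ℂ → F} {u v : ℝ}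
    (hf : HarmonicAt f (u + v * I)) :
    iteratedDeriv 2 (fun t : ℝ => f (t + v * I)) u
      + iteratedDeriv 2 (fun t : ℝ => f (u + t * I)) v = 0 := by
  have horiz : (fun t : ℝ => f (t + v * I)) = fun t : ℝ => f (v * I + t • 1) := by
    ext t; congr 1; simp [add_comm]
  have vert : (fun t : ℝ => f (u + t * I)) = fun t : ℝ => f (u + t • I) := by
    ext t; simp [Complex.real_smul]
  have hz : (u + v * I : ℂ) = v * I + u • 1 := by simp [add_comm]
  have hz' : (u + v * I : ℂ) = u + v • I := by simp [Complex.real_smul]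
  rw [horiz, vert, iteratedDeriv_two_comp_line (hz ▸ hf.1),
    iteratedDeriv_two_comp_line (hz' ▸ hf.1), ← hz, ← hz']
  simpa [laplacian_eq_iteratedFDeriv_complexPlane] using hf.2.self_of_nhds

lemma log_secondChernRicci_eq {a b : ℝ} (ha : 0 < a) (hb : 0 < b) :
    Real.log ((-(-(2 * b / (1 + a ^ 2)) ^ 4)) ^ (-(1 / 2) : ℝ)
      * (1 - ((1 - a ^ 2) / (1 + a ^ 2)) ^ 2)) = 2 * (Real.log a - Real.log b) := by
  have hx : 0 < 2 * b / (1 + a ^ 2) := by positivity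
  have h_curv : (-(-(2 * b / (1 + a ^ 2)) ^ 4)) ^ (-(1 / 2) : ℝ)
      = ((2 * b / (1 + a ^ 2)) ^ 2)⁻¹ := by
    rw [neg_neg, ← Real.rpow_natCast (2 * b / (1 + a ^ 2)) 4,
      ← Real.rpow_natCast (2 * b / (1 + a ^ 2)) 2, ← Real.rpow_neg hx.le,
      ← Real.rpow_mul hx.le]
    norm_num
  have h_prod : ((2 * b / (1 + a ^ 2)) ^ 2)⁻¹ * (1 - ((1 - a ^ 2) / (1 + a ^ 2)) ^ 2)
      = (a / b) ^ 2 := by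
    field_simp; ring
  rw [h_curv, h_prod, Real.log_pow, Real.log_div ha.ne' hb.ne']
  push_cast; ring

/-- The second Chern–Ricci function `CR² = ln((-K)^(-1/2)·(1-N²))`, viewed as a
function of `(u,v)` with `ζ = u + iv`, is harmonic on `U`: the flat Laplacian
`∂²CR²/∂u² + ∂²CR²/∂v²` vanishes at every point of `U`. -/
theorem second_chern_ricci_harmonic
    (U : Set ℂ) (hU : IsOpen U) (g g' : ℂ → ℂ)
    (hg : ∀ ζ ∈ U, HasDerivAt g (g' ζ) ζ)
    (hg0 : ∀ ζ ∈ U, g ζ ≠ 0)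
    (hg' : ∀ ζ ∈ U, g' ζ ≠ 0)
    (K N : ℂ → ℝ)
    (hK : ∀ ζ, K ζ = -(2 * ‖g' ζ‖ / (1 + ‖g ζ‖ ^ 2)) ^ 4)
    (hN : ∀ ζ, N ζ = (1 - ‖g ζ‖ ^ 2) / (1 + ‖g ζ‖ ^ 2))
    (CR : ℝ → ℝ → ℝ)
    (hCR : ∀ u v : ℝ, CR u v =
      Real.log ((-K (u + v * Complex.I)) ^ (-(1 / 2) : ℝ) * (1 - N (u + v * Complex.I) ^ 2))) :
    ∀ u v : ℝ, (u + v * Complex.I : ℂ) ∈ U →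
      iteratedDeriv 2 (fun u' => CR u' v) u + iteratedDeriv 2 (fun v' => CR u v') v = 0 := by
  intro u v hz
  simp only [hCR]
  refine HarmonicAt.iteratedDeriv_two_add_iteratedDeriv_two
    (f := fun ζ => Real.log ((-K ζ) ^ (-(1 / 2) : ℝ) * (1 - N ζ ^ 2))) ?_
  have hU_nhds : U ∈ 𝓝 (u + v * I : ℂ) := hU.mem_nhds hz
  have hg_an : AnalyticOnNhd ℂ g U :=
    DifferentiableOn.analyticOnNhd
      (fun ζ hζ => (hg ζ hζ).differentiableAt.differentiableWithinAt) hU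
  have hg'_eq : g' =ᶠ[𝓝 (u + v * I : ℂ)] deriv g :=
    Filter.eventually_of_mem hU_nhds fun ζ hζ => (hg ζ hζ).deriv.symm
  have hlog_g : HarmonicAt (fun ζ => Real.log ‖g ζ‖) (u + v * I) :=
    (hg_an _ hz).harmonicAt_log_norm (hg0 _ hz)
  have hlog_g' : HarmonicAt (fun ζ => Real.log ‖g' ζ‖) (u + v * I) :=
    (harmonicAt_congr_nhds (hg'_eq.fun_comp (Real.log ‖·‖))).mpr
      ((hg_an.deriv _ hz).harmonicAt_log_norm (hg'_eq.self_of_nhds ▸ hg' _ hz))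
  refine (harmonicAt_congr_nhds ?_).mpr ((hlog_g.sub hlog_g').const_smul (c := (2 : ℝ)))
  filter_upwards [hU_nhds] with ζ hζ
  simp only [hK, hN, Pi.smul_apply, Pi.sub_apply, smul_eq_mul]
  exact log_secondChernRicci_eq (norm_pos_iff.2 (hg0 ζ hζ)) (norm_pos_iff.2 (hg' ζ hζ))
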